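/- For all sets E, F ⊆ ℝⁿ (not necessarily Borel), for Lebesgue almost every z ∈ ℝⁿ, dimH(E ∩ (F + z)) ≤ max{0, dimH(E × F) − n}. -/

import Mathlib

/-!
The shear `(x, y) ↦ (x, x - y)` is Lipschitz and maps `E × F` onto a set `A` whose slice over `z`
is `E ∩ (F + z)`, so it suffices to show that almost every slice of any `A ⊆ X × ℝⁿ` satisfies
`dimH A_z ≤ dimH A - n`. If `μH[n + t] A = 0`, cover `A` by sets `Uᵢ` of small diameter with
`∑ diam(Uᵢ)^(n+t)` small. Then `g(z) = ∑ diam(Uᵢ)^t 1_{π(Uᵢ)}(z)` dominates the `t`-dimensional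
cover sum of `A_z`, and `vol π(Uᵢ) ≲ diam(Uᵢ)^n` gives `∫ g ≲ ∑ diam(Uᵢ)^(n+t)`. Fatou's lemma along
a sequence of such covers yields `μH[t] A_z = 0` for almost every `z`.
-/

open Filter Metric MeasureTheory Set
open scoped ENNReal Topology

namespace AD

/-- Partial recursiveness relative to an oracle `O : ℕ →. ℕ`. -/
inductive OPartrec (O : ℕ →. ℕ) : (ℕ →. ℕ) → Prop
  | oracle : OPartrec O O
  | zero : OPartrec O (pure 0)
  | succ : OPartrec O Nat.succ
  | left : OPartrec O ↑fun n : ℕ => n.unpair.1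
  | right : OPartrec O ↑fun n : ℕ => n.unpair.2
  | pair {f g} : OPartrec O f → OPartrec O g →
      OPartrec O fun n => Nat.pair <$> f n <*> g n
  | comp {f g} : OPartrec O f → OPartrec O g → OPartrec O fun n => g n >>= f
  | prec {f g} : OPartrec O f → OPartrec O g → OPartrec O (Nat.unpaired fun a n =>
      n.rec (f a) fun y IH => do let i ← IH; g (Nat.pair a (Nat.pair y i)))
  | rfind {f} : OPartrec O f →
      OPartrec O fun a => Nat.rfind fun n => (fun m => m = 0) <$> f (Nat.pair a n)

/-- The characteristic-function oracle of a set `A ⊆ ℕ`. -/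
noncomputable def charOracle (A : Set ℕ) : ℕ →. ℕ :=
  fun k => Part.some (A.indicator (fun _ => 1) k)

/-- The trivial (computable) oracle; relativization to it yields plain computability. -/
def zeroOracle : ℕ →. ℕ := fun _ => Part.some 0

/-- The `ℕ →. ℕ` function on encoded inputs induced by a machine on binary strings. -/
def strFun (M : List Bool →. ℕ) : ℕ →. ℕ :=
  fun k => Part.ofOption (Encodable.decode (α := List Bool) k) >>= M

/-- `M` is a prefix(-free) Turing machine relative to the oracle `O`. -/
structure PrefixMachine (O : ℕ →. ℕ) (M : List Bool →. ℕ) : Prop where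
  opartrec : OPartrec O (strFun M)
  prefixFree : ∀ p q : List Bool, (M p).Dom → (M q).Dom → p <+: q → p = q

/-- `M` is a plain (unrelativized) prefix Turing machine. -/
structure PlainPrefixMachine (M : List Bool →. ℕ) : Prop where
  partrec : Nat.Partrec (strFun M)
  prefixFree : ∀ p q : List Bool, (M p).Dom → (M q).Dom → p <+: q → p = q

/-- The prefix Kolmogorov complexity of (the code of) a natural number `k`
relative to the machine `M`: the length of a shortest program for `k`. -/
noncomputable def KM (M : List Bool →. ℕ) (k : ℕ) : ℕ :=
  sInf {l | ∃ p : List Bool, p.length = l ∧ k ∈ M p}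

/-- `U` is a universal oracle prefix machine (a family, one machine per oracle,
optimal up to an additive constant among all prefix machines with that oracle). -/
structure UniversalOraclePrefixMachine (U : (ℕ →. ℕ) → List Bool →. ℕ) : Prop where
  isMachine : ∀ O, PrefixMachine O (U O)
  universal : ∀ O M, PrefixMachine O M → ∃ c : ℕ, ∀ k : ℕ, ∀ p : List Bool,
      k ∈ M p → ∃ q : List Bool, k ∈ U O q ∧ q.length ≤ p.length + c

/-- `V` is a (plain) universal prefix machine. -/
structure UniversalPrefixMachine (V : List Bool →. ℕ) : Prop where
  isMachine : PlainPrefixMachine V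
  universal : ∀ M, PlainPrefixMachine M → ∃ c : ℕ, ∀ k : ℕ, ∀ p : List Bool,
      k ∈ M p → ∃ q : List Bool, k ∈ V q ∧ q.length ≤ p.length + c

variable {n : ℕ}

/-- The point of `ℝⁿ` with the given rational coordinates. -/
noncomputable def ratPt (q : Fin n → ℚ) : EuclideanSpace ℝ (Fin n) := WithLp.toLp 2 (fun i => (q i : ℝ))

/-- `K_r(x)`: the Kolmogorov complexity of `x ∈ ℝⁿ` at precision `r`, relative to the
machine `V`: the minimum complexity of a rational point within distance `2^{-r}` of `x`. -/
noncomputable def Kr (V : List Bool →. ℕ) (x : EuclideanSpace ℝ (Fin n)) (r : ℕ) : ℕ :=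
  sInf {l | ∃ q : Fin n → ℚ, dist (ratPt q) x < 2⁻¹ ^ r ∧ l = KM V (Encodable.encode q)}

/-- The algorithmic dimension of a point, w.r.t. the machine `V`. -/
noncomputable def adim (V : List Bool →. ℕ) (x : EuclideanSpace ℝ (Fin n)) : ℝ :=
  liminf (fun r : ℕ => (Kr V x r : ℝ) / r) atTop

/-- The strong algorithmic dimension of a point, w.r.t. the machine `V`. -/
noncomputable def aDim (V : List Bool →. ℕ) (x : EuclideanSpace ℝ (Fin n)) : ℝ :=
  limsup (fun r : ℕ => (Kr V x r : ℝ) / r) atTop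

/-- The Kolmogorov complexity of a set `E ⊆ ℝⁿ`: the minimal complexity of a rational
point of `E` (with the convention `K(∅) = ∞`, via `ℕ∞`-valued infimum). -/
noncomputable def KSet (V : List Bool →. ℕ) (E : Set (EuclideanSpace ℝ (Fin n))) : ℕ∞ :=
  sInf {m | ∃ q : Fin n → ℚ, ratPt q ∈ E ∧ m = (KM V (Encodable.encode q) : ℕ∞)}

/-- A canonical oracle encoding a point `y ∈ ℝⁿ`: on input `r` it returns the code of the
dyadic rational approximation of `y` with denominator `2^r`. -/
noncomputable def pointOracle (y : EuclideanSpace ℝ (Fin n)) : ℕ →. ℕ :=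
  fun r => Part.some (Encodable.encode (fun i => ((⌊y i * 2 ^ r⌋ : ℚ) / 2 ^ r) : Fin n → ℚ))

variable {X : Type*} [MetricSpace X]

/-- Covering number of `E` at scale `2^{-r}`. -/
noncomputable def coverNum (E : Set X) (r : ℕ) : ℕ :=
  sInf {k | ∃ S : Finset X, S.card = k ∧ E ⊆ ⋃ c ∈ S, ball c (2⁻¹ ^ r)}

/-- Upper box-counting (Minkowski) dimension. -/
noncomputable def upperBoxDim (E : Set X) : ℝ :=
  limsup (fun r : ℕ => Real.logb 2 (coverNum E r) / r) atTop

/-- Classical packing dimension, via its characterization as the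
modified upper box dimension. -/
noncomputable def packingDim (E : Set X) : ℝ :=
  sInf {d | ∃ C : ℕ → Set X, (∀ i, Bornology.IsBounded (C i)) ∧ E ⊆ ⋃ i, C i ∧
    d = ⨆ i, upperBoxDim (C i)}

end AD

open AD

open scoped NNReal

theorem measure_le_measure_ball_mul_ediam_pow {E : Type*} [NormedAddCommGroup E]
    [NormedSpace ℝ E] [MeasurableSpace E] [BorelSpace E] [FiniteDimensional ℝ E]
    (μ : Measure E) [μ.IsAddHaarMeasure] (s : Set E) :
    μ s ≤ μ (ball 0 1) * ediam s ^ Module.finrank ℝ E := by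
  rcases s.eq_empty_or_nonempty with rfl | ⟨c, hc⟩
  · simp
  by_cases hs : ediam s = ∞
  · have hE : Module.finrank ℝ E ≠ 0 := fun h0 => by
      have := Module.finrank_zero_iff.mp h0
      simp [ediam_subsingleton subsingleton_of_subsingleton] at hs
    rw [hs, ENNReal.top_pow hE, ENNReal.mul_top (measure_ball_pos μ 0 one_pos).ne']
    exact le_top
  have hsub : s ⊆ closedBall c (ediam s).toReal := fun x hx => by
    rw [mem_closedBall, dist_edist]
    exact ENNReal.toReal_mono hs (edist_le_ediam_of_mem hx hc)
  calc μ s ≤ μ (closedBall c (ediam s).toReal) := measure_mono hsub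
    _ = μ (ball 0 1) * ediam s ^ Module.finrank ℝ E := by
      rw [Measure.addHaar_closedBall _ _ ENNReal.toReal_nonneg, ENNReal.ofReal_pow
        ENNReal.toReal_nonneg, ENNReal.ofReal_toReal hs, mul_comm]

theorem exists_cover_tsum_ediam_rpow_lt {X : Type*} [EMetricSpace X] [MeasurableSpace X]
    [BorelSpace X] {d : ℝ} (hd : 0 < d) {s : Set X} (hs : μH[d] s = 0) {r ε : ℝ≥0∞}
    (hr : 0 < r) (hε : 0 < ε) :
    ∃ t : ℕ → Set X, s ⊆ ⋃ i, t i ∧ (∀ i, ediam (t i) ≤ r) ∧ ∑' i, ediam (t i) ^ d < ε := by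
  have hinf : (⨅ (t : ℕ → Set X) (_ : s ⊆ ⋃ i, t i) (_ : ∀ i, ediam (t i) ≤ r),
      ∑' i, ⨆ _ : (t i).Nonempty, ediam (t i) ^ d) < ε := by
    refine lt_of_le_of_lt ?_ (hs ▸ hε)
    rw [Measure.hausdorffMeasure_apply]
    exact le_iSup₂ (f := fun r (_ : 0 < r) => ⨅ (t : ℕ → Set X) (_ : s ⊆ ⋃ i, t i)
      (_ : ∀ i, ediam (t i) ≤ r), ∑' i, ⨆ _ : (t i).Nonempty, ediam (t i) ^ d) r hr
  simp only [iInf_lt_iff] at hinf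
  obtain ⟨t, hts, htr, hsum⟩ := hinf
  refine ⟨t, hts, htr, lt_of_le_of_lt (ENNReal.tsum_le_tsum fun i => ?_) hsum⟩
  rcases (t i).eq_empty_or_nonempty with h | h
  · simp [h, ENNReal.zero_rpow_of_pos hd]
  · exact le_iSup (fun _ : (t i).Nonempty => ediam (t i) ^ d) h

section Slicing

variable {X Y : Type*}

theorem ediam_slice_le [PseudoEMetricSpace X] [PseudoEMetricSpace Y] (U : Set (X × Y)) (y : Y) :
    ediam {x | (x, y) ∈ U} ≤ ediam U :=
  ediam_le fun x hx x' hx' => by simpa [Prod.edist_eq] using edist_le_ediam_of_mem (s := U) hx hx'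

theorem ediam_rpow_mul_measure_snd_image_le [PseudoEMetricSpace X] [PseudoEMetricSpace Y]
    [MeasurableSpace Y] {μ : Measure Y} {C : ℝ≥0∞} {d : ℝ≥0}
    (hμ : ∀ s, μ s ≤ C * ediam s ^ (d : ℝ)) {t : ℝ} (ht : 0 ≤ t) (U : Set (X × Y)) :
    ediam U ^ t * μ (Prod.snd '' U) ≤ C * ediam U ^ ((d : ℝ) + t) := by
  calc ediam U ^ t * μ (Prod.snd '' U) ≤ ediam U ^ t * (C * ediam (Prod.snd '' U) ^ (d : ℝ)) := by
        gcongr; exact hμ _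
    _ ≤ ediam U ^ t * (C * ediam U ^ (d : ℝ)) := by
        gcongr; simpa using LipschitzWith.prod_snd.ediam_image_le U
    _ = C * ediam U ^ ((d : ℝ) + t) := by
        rw [ENNReal.rpow_add_of_nonneg _ _ d.coe_nonneg ht]; ring

variable [PseudoEMetricSpace X] [PseudoEMetricSpace Y] [MeasurableSpace Y]

-- The measurable hull keeps this measurable although `U i` and `π(U i)` need not be.
noncomputable def projCoverSum (μ : Measure Y) (U : ℕ → Set (X × Y)) (t : ℝ) (y : Y) : ℝ≥0∞ :=
  ∑' i, (toMeasurable μ (Prod.snd '' U i)).indicator (fun _ => ediam (U i) ^ t) y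

variable {μ : Measure Y} (U : ℕ → Set (X × Y)) {t : ℝ}

theorem measurable_projCoverSum : Measurable (projCoverSum μ U t) :=
  .tsum fun _ => measurable_const.indicator (measurableSet_toMeasurable _ _)

theorem lintegral_projCoverSum_le {C : ℝ≥0∞} {d : ℝ≥0} (hμ : ∀ s, μ s ≤ C * ediam s ^ (d : ℝ))
    (ht : 0 ≤ t) : ∫⁻ y, projCoverSum μ U t y ∂μ ≤ C * ∑' i, ediam (U i) ^ ((d : ℝ) + t) := by
  simp only [projCoverSum]
  rw [← ENNReal.tsum_mul_left, lintegral_tsum fun i =>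
    (measurable_const.indicator (measurableSet_toMeasurable _ _)).aemeasurable]
  refine ENNReal.tsum_le_tsum fun i => ?_
  rw [lintegral_indicator (measurableSet_toMeasurable _ _), setLIntegral_const,
    measure_toMeasurable]
  exact ediam_rpow_mul_measure_snd_image_le hμ ht _

theorem tsum_ediam_slice_rpow_le_projCoverSum (ht : 0 < t) (y : Y) :
    ∑' i, ediam {x | (x, y) ∈ U i} ^ t ≤ projCoverSum μ U t y := by
  refine ENNReal.tsum_le_tsum fun i => ?_
  by_cases hy : y ∈ toMeasurable μ (Prod.snd '' U i)
  · rw [indicator_of_mem hy]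
    gcongr
    exact ediam_slice_le _ _
  · have hempty : {x | (x, y) ∈ U i} = ∅ :=
      eq_empty_of_forall_notMem fun x hx => hy (subset_toMeasurable _ _ ⟨_, hx, rfl⟩)
    simp [indicator_of_notMem hy, hempty, ENNReal.zero_rpow_of_pos ht]

end Slicing

section SlicingDim

variable {X Y : Type*} [EMetricSpace X] [MeasurableSpace X] [BorelSpace X] [EMetricSpace Y]
  [MeasurableSpace Y] [BorelSpace Y] [SecondCountableTopologyEither X Y]
  {μ : Measure Y} {C : ℝ≥0∞} {d : ℝ≥0}

theorem ae_hausdorffMeasure_slice_eq_zero (hC : C ≠ ∞) (hμ : ∀ s, μ s ≤ C * ediam s ^ (d : ℝ))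
    {t : ℝ} (ht : 0 < t) {A : Set (X × Y)} (hA : μH[d + t] A = 0) :
    ∀ᵐ y ∂μ, μH[t] {x | (x, y) ∈ A} = 0 := by
  have hr : Tendsto (fun k : ℕ => (2⁻¹ : ℝ≥0∞) ^ k) atTop (𝓝 0) :=
    ENNReal.tendsto_pow_atTop_nhds_zero_of_lt_one (by norm_num)
  choose U hAU hUr hUsum using fun k : ℕ =>
    exists_cover_tsum_ediam_rpow_lt (by positivity) hA (r := 2⁻¹ ^ k) (ε := 2⁻¹ ^ k)
      (ENNReal.pow_pos (by norm_num) k) (ENNReal.pow_pos (by norm_num) k)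
  have hslice (y : Y) :
      μH[t] {x | (x, y) ∈ A} ≤ liminf (fun k => projCoverSum μ (U k) t y) atTop := by
    refine (Measure.hausdorffMeasure_le_liminf_tsum t _ _ hr (fun k i => {x | (x, y) ∈ U k i})
      (.of_forall fun k i => (ediam_slice_le _ _).trans (hUr k i))
      (.of_forall fun k x hx => by simpa using hAU k hx)).trans ?_
    exact liminf_le_liminf (.of_forall fun k => tsum_ediam_slice_rpow_le_projCoverSum _ ht y)
  have hint : ∫⁻ y, liminf (fun k => projCoverSum μ (U k) t y) atTop ∂μ = 0 := by
    refine le_antisymm ?_ zero_le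
    calc _ ≤ liminf (fun k => ∫⁻ y, projCoverSum μ (U k) t y ∂μ) atTop :=
          lintegral_liminf_le fun k => measurable_projCoverSum (U k)
      _ ≤ liminf (fun k : ℕ => C * 2⁻¹ ^ k) atTop := liminf_le_liminf <| .of_forall fun k =>
          (lintegral_projCoverSum_le (U k) hμ ht.le).trans (by gcongr; exact (hUsum k).le)
      _ = 0 := by simpa using (ENNReal.Tendsto.const_mul hr (Or.inr hC)).liminf_eq
  filter_upwards [(lintegral_eq_zero_iff (.liminf fun k => measurable_projCoverSum (U k))).1 hint]
    with y hy
  exact le_antisymm ((hslice y).trans_eq hy) zero_le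

theorem ae_dimH_slice_le_of_lt (hC : C ≠ ∞) (hμ : ∀ s, μ s ≤ C * ediam s ^ (d : ℝ)) {t : ℝ≥0}
    (ht : 0 < t) {A : Set (X × Y)} (hA : dimH A < d + t) :
    ∀ᵐ y ∂μ, dimH {x | (x, y) ∈ A} ≤ t := by
  have hA' : μH[d + t] A = 0 := by exact_mod_cast hausdorffMeasure_of_dimH_lt (d := d + t) hA
  filter_upwards [ae_hausdorffMeasure_slice_eq_zero hC hμ ht hA'] with y hy
  exact dimH_le_of_hausdorffMeasure_ne_top (hy ▸ ENNReal.zero_ne_top)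

theorem ae_dimH_slice_le (hC : C ≠ ∞) (hμ : ∀ s, μ s ≤ C * ediam s ^ (d : ℝ)) (A : Set (X × Y)) :
    ∀ᵐ y ∂μ, dimH {x | (x, y) ∈ A} ≤ dimH A - d := by
  by_cases htop : dimH A - d = ∞
  · simp [htop]
  set c := (dimH A - d).toNNReal
  have hc : (c : ℝ≥0∞) = dimH A - d := ENNReal.coe_toNNReal htop
  have hk (k : ℕ) : ∀ᵐ y ∂μ, dimH {x | (x, y) ∈ A} ≤ c + ((k : ℝ≥0) + 1)⁻¹ := by
    refine ae_dimH_slice_le_of_lt hC hμ (t := c + ((k : ℝ≥0) + 1)⁻¹) (by positivity) ?_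
    calc dimH A ≤ d + c := by rw [hc]; exact le_add_tsub
      _ < _ := ENNReal.add_lt_add_left ENNReal.coe_ne_top
        (by exact_mod_cast lt_add_of_pos_right c (by positivity))
  filter_upwards [ae_all_iff.2 hk] with y hy
  rw [← hc]
  refine ENNReal.le_of_forall_pos_le_add fun ε hε _ => ?_
  obtain ⟨k, hk0, hkε⟩ := NNReal.exists_nat_pos_inv_lt hε
  calc dimH {x | (x, y) ∈ A} ≤ ((c + ((k : ℝ≥0) + 1)⁻¹ : ℝ≥0) : ℝ≥0∞) := by exact_mod_cast hy k
    _ ≤ c + ε := by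
      rw [ENNReal.coe_add]
      refine add_le_add_right (ENNReal.coe_le_coe.2 ?_) _
      exact (inv_anti₀ (by exact_mod_cast hk0) (le_add_of_nonneg_right zero_le_one)).trans hkε.le

end SlicingDim

theorem slice_image_shear {G : Type*} [AddCommGroup G] (E F : Set G) (z : G) :
    {x | (x, z) ∈ (fun p : G × G => (p.1, p.1 - p.2)) '' E ×ˢ F} = E ∩ (· + z) '' F := by
  ext x
  simp only [mem_ofPred_eq, mem_image, mem_prod, Prod.mk.injEq, mem_inter_iff]
  constructor
  · rintro ⟨⟨a, b⟩, ⟨ha, hb⟩, rfl, rfl⟩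
    exact ⟨ha, b, hb, add_sub_cancel b a⟩
  · rintro ⟨hx, y, hy, rfl⟩
    exact ⟨(y + z, y), ⟨hx, hy⟩, rfl, add_sub_cancel_left y z⟩

/-- for all `E, F ⊆ ℝⁿ`, for Lebesgue a.e. `z ∈ ℝⁿ`,
`dimH(E ∩ (F + z)) ≤ max{0, dimH(E × F) − n}`. -/
theorem intersection_bound (n : ℕ) (E F : Set (EuclideanSpace ℝ (Fin n))) :
    ∀ᵐ z ∂(volume : Measure (EuclideanSpace ℝ (Fin n))),
      dimH (E ∩ ((fun y => y + z) '' F)) ≤ dimH (E ×ˢ F) - n := by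
  have hvol (s : Set (EuclideanSpace ℝ (Fin n))) :
      volume s ≤ volume (ball (0 : EuclideanSpace ℝ (Fin n)) 1) * ediam s ^ ((n : ℝ≥0) : ℝ) := by
    simpa [finrank_euclideanSpace_fin] using measure_le_measure_ball_mul_ediam_pow volume s
  filter_upwards [ae_dimH_slice_le measure_ball_lt_top.ne hvol
    ((fun p => (p.1, p.1 - p.2)) '' E ×ˢ F)] with z hz
  rw [← slice_image_shear]
  exact hz.trans <| tsub_le_tsub_right ((LipschitzWith.prod_fst.prodMk
    (LipschitzWith.prod_fst.sub LipschitzWith.prod_snd)).dimH_image_le _) _
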